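/- arXiv:1110.0080 — 5 statements merged into one kernel-verified Lean document; each statement's English description precedes it below -/
import Mathlib

section
/- Let ρ : F₂ → Homeo⁺(S¹)~ be a homomorphism from the free group on generators a, b, and let w̄ denote the word obtained by reversing the order of the letters of w ∈ F₂. Then the supremum R(w,r,s) of rot~(ρ(w)) over all ρ with rot~(ρ(a))=r and rot~(ρ(b))=s satisfies R(w,r,s) = R(w̄,r,s). -/
/-- The translation number of a lift of an orientation-preserving circle homeomorphism. -/
noncomputable def rotZ (f : CircleDeg1Liftˣ) : ℝ :=
  (f : CircleDeg1Lift).translationNumber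

/-- The generator `a` of the free group `F₂`. -/
def genA : FreeGroup Bool := FreeGroup.of true

/-- The generator `b` of the free group `F₂`. -/
def genB : FreeGroup Bool := FreeGroup.of false

/-- `R(w,r,s)`: the supremum of `rot~(ρ w)` over all representations
`ρ : F₂ → Homeo⁺(S¹)~` with `rot~(ρ a) = r` and `rot~(ρ b) = s`. -/
noncomputable def RR (w : FreeGroup Bool) (r s : ℝ) : ℝ :=
  sSup { t : ℝ | ∃ ρ : FreeGroup Bool →* CircleDeg1Liftˣ,
    rotZ (ρ genA) = r ∧ rotZ (ρ genB) = s ∧ rotZ (ρ w) = t }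

/-- The word obtained from `w` by reversing the order of its letters. -/
def wordReverse (w : FreeGroup Bool) : FreeGroup Bool :=
  FreeGroup.mk w.toWord.reverse

/-!
If `ι` is the automorphism of `F₂` inverting both generators, the reversal of `w` is `(ι w)⁻¹`.
Given `ρ`, the representation `x ↦ σ ρ(ι x) σ⁻¹`, with `σ x = -x` orientation-reversing, negates
translation numbers twice on `a` and `b` (which `ι` inverts) and gives `w` the translation number
of `ρ` on the reversed word. Hence `w` and its reversal have the same set of attainable
translation numbers.
-/

namespace FreeGroup

variable {α : Type*}

def invertGenerators : FreeGroup α →* FreeGroup α :=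
  FreeGroup.lift fun i => (of i)⁻¹

@[simp] lemma invertGenerators_of (i : α) : invertGenerators (of i) = (of i)⁻¹ :=
  lift_apply_of

lemma invertGenerators_invertGenerators (x : FreeGroup α) :
    invertGenerators (invertGenerators x) = x := by
  have h : invertGenerators.comp invertGenerators = MonoidHom.id (FreeGroup α) :=
    ext_hom _ _ fun i => by simp
  exact DFunLike.congr_fun h x

lemma invertGenerators_mk_singleton (p : α × Bool) :
    invertGenerators (mk [p]) = (mk [p])⁻¹ := by
  obtain ⟨i, _ | _⟩ := p
  · have h : mk [(i, false)] = (of i)⁻¹ := by rw [of, inv_mk]; rfl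
    rw [h, _root_.map_inv, invertGenerators_of, inv_inv]
  · exact invertGenerators_of i

lemma mk_reverse (L : List (α × Bool)) : mk L.reverse = (invertGenerators (mk L))⁻¹ := by
  induction L with
  | nil => simp [← one_eq_mk]
  | cons p L ih =>
    rw [List.reverse_cons, ← mul_mk, ih, show mk (p :: L) = mk [p] * mk L by rw [mul_mk]; rfl,
      _root_.map_mul, invertGenerators_mk_singleton, mul_inv_rev, inv_inv]

end FreeGroup

lemma wordReverse_eq (w : FreeGroup Bool) :
    wordReverse w = (FreeGroup.invertGenerators w)⁻¹ := by
  rw [wordReverse, FreeGroup.mk_reverse, FreeGroup.mk_toWord]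

lemma wordReverse_wordReverse (w : FreeGroup Bool) : wordReverse (wordReverse w) = w := by
  rw [wordReverse_eq, wordReverse_eq, map_inv, inv_inv,
    FreeGroup.invertGenerators_invertGenerators]

lemma wordReverse_of (i : Bool) : wordReverse (FreeGroup.of i) = FreeGroup.of i := by
  rw [wordReverse_eq, FreeGroup.invertGenerators_of, inv_inv]

namespace CircleDeg1Lift

def negConj : CircleDeg1Lift →* CircleDeg1Lift where
  toFun f :=
    { toFun := fun x => -f (-x)
      monotone' := fun _ _ h => neg_le_neg (f.monotone (neg_le_neg h))
      map_add_one' := fun x => by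
        have h := f.map_sub_nat (-x) 1
        rw [Nat.cast_one] at h
        change -f (-(x + 1)) = -f (-x) + 1
        rw [neg_add', h, neg_sub, sub_eq_neg_add] }
  map_one' := ext fun x => neg_neg x
  map_mul' f g := ext fun x => by
    change -f (g (-x)) = -f (-(-g (-x)))
    rw [neg_neg]

@[simp] lemma negConj_apply (f : CircleDeg1Lift) (x : ℝ) : negConj f x = -f (-x) := rfl

lemma translationNumber_negConj (f : CircleDeg1Lift) :
    (negConj f).translationNumber = -f.translationNumber := by
  refine (negConj f).translationNumber_eq_of_tendsto₀ ?_
  have h : ∀ n : ℕ, (negConj f)^[n] 0 = -(f ^ n) 0 := fun n => by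
    rw [← coe_pow, ← map_pow, negConj_apply, neg_zero]
  simpa only [h, neg_div] using f.tendsto_translation_number₀.neg

end CircleDeg1Lift

def reverseRep {α : Type*} (ρ : FreeGroup α →* CircleDeg1Liftˣ) :
    FreeGroup α →* CircleDeg1Liftˣ :=
  (Units.map CircleDeg1Lift.negConj).comp (ρ.comp FreeGroup.invertGenerators)

lemma rotZ_reverseRep {α : Type*} [DecidableEq α] (ρ : FreeGroup α →* CircleDeg1Liftˣ)
    (x : FreeGroup α) : rotZ (reverseRep ρ x) = rotZ (ρ (FreeGroup.mk x.toWord.reverse)) := by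
  rw [FreeGroup.mk_reverse, FreeGroup.mk_toWord, map_inv, rotZ, rotZ,
    CircleDeg1Lift.translationNumber_units_inv]
  exact CircleDeg1Lift.translationNumber_negConj _

def rotValues (w : FreeGroup Bool) (r s : ℝ) : Set ℝ :=
  { t : ℝ | ∃ ρ : FreeGroup Bool →* CircleDeg1Liftˣ,
    rotZ (ρ genA) = r ∧ rotZ (ρ genB) = s ∧ rotZ (ρ w) = t }

lemma rotValues_subset_wordReverse (w : FreeGroup Bool) (r s : ℝ) :
    rotValues w r s ⊆ rotValues (wordReverse w) r s := by
  rintro t ⟨ρ, ha, hb, hw⟩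
  have h : ∀ v, rotZ (reverseRep ρ v) = rotZ (ρ (wordReverse v)) := rotZ_reverseRep ρ
  refine ⟨reverseRep ρ, ?_, ?_, ?_⟩ <;> rw [h]
  · rwa [genA, wordReverse_of]
  · rwa [genB, wordReverse_of]
  · rwa [wordReverse_wordReverse]

/-- Left-right symmetry: `R(w,r,s) = R(w̄,r,s)` where `w̄` is the reversal of `w`. -/
theorem RR_reverse (w : FreeGroup Bool) (r s : ℝ) :
    RR w r s = RR (wordReverse w) r s := by
  change sSup (rotValues w r s) = sSup (rotValues (wordReverse w) r s)
  have reverse_subset := rotValues_subset_wordReverse (wordReverse w) r s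
  rw [wordReverse_wordReverse] at reverse_subset
  exact congrArg sSup (subset_antisymm (rotValues_subset_wordReverse w r s) reverse_subset)
end

section
/- For every lift φ of an orientation-preserving circle homeomorphism and every ε > 0, there exists a C^∞ diffeomorphism lift φ' with |φ'(x) − φ(x)| < ε for all x and rot~(φ') = rot~(φ). -/
set_option maxHeartbeats 1600000

open Filter Set Topology MeasureTheory Metric Function intervalIntegral CircleDeg1Lift
open scoped Real



/-- A monotone function has nonnegative derivative. -/
theorem aux_monotone_deriv_nonneg {f : ℝ → ℝ} (hm : Monotone f) (x : ℝ) : 0 ≤ deriv f x := by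
  by_cases h : DifferentiableAt ℝ f x
  · have hd : Tendsto (slope f x) (𝓝[≠] x) (𝓝 (deriv f x)) :=
      (hasDerivAt_iff_tendsto_slope.mp h.hasDerivAt)
    refine ge_of_tendsto hd ?_
    filter_upwards [self_mem_nhdsWithin] with y hy
    rcases lt_or_gt_of_ne (Ne.symm hy) with h1 | h1
    · rw [slope_def_field]
      exact div_nonneg (sub_nonneg.mpr (hm h1.le)) (sub_nonneg.mpr h1.le)
    · rw [slope_def_field, div_nonneg_iff]
      right
      exact ⟨sub_nonpos.mpr (hm h1.le), sub_nonpos.mpr h1.le⟩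
  · rw [deriv_zero_of_not_differentiableAt h]

/-- Uniform continuity of a continuous circle-degree-one lift map. -/
theorem aux_unif (f : CircleDeg1Lift) (hf : Continuous f) {c : ℝ} (hc : 0 < c) :
    ∃ δ > 0, ∀ x y : ℝ, |y - x| < δ → |f y - f x| ≤ c := by
  have hK : IsCompact (Icc (-1 : ℝ) 2) := isCompact_Icc
  have hu : UniformContinuousOn f (Icc (-1 : ℝ) 2) :=
    hK.uniformContinuousOn_of_continuous hf.continuousOn
  rw [Metric.uniformContinuousOn_iff] at hu
  obtain ⟨δ₀, hδ₀, hδ⟩ := hu c hc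
  refine ⟨min δ₀ 1, lt_min hδ₀ one_pos, fun x y hxy => ?_⟩
  have h1 : |y - x| < 1 := hxy.trans_le (min_le_right _ _)
  have h0 : |y - x| < δ₀ := hxy.trans_le (min_le_left _ _)
  set n : ℤ := ⌊x⌋ with hn
  have h2 := Int.floor_le x
  have h3 := Int.lt_floor_add_one x
  obtain ⟨h4, h5⟩ := abs_lt.mp h1
  have hx' : x - n ∈ Icc (-1 : ℝ) 2 := ⟨by simp only [hn]; linarith, by simp only [hn]; linarith⟩
  have hy' : y - n ∈ Icc (-1 : ℝ) 2 := by
    obtain ⟨hx1, hx2⟩ := hx'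
    exact ⟨by linarith, by linarith⟩
  have key : f y - f x = f (y - n) - f (x - n) := by
    rw [f.map_sub_int, f.map_sub_int]; ring
  rw [key]
  have := hδ (y - n) hy' (x - n) hx' (by
    rw [Real.dist_eq]
    have : y - n - (x - n) = y - x := by ring
    rw [this]; exact h0)
  rw [Real.dist_eq] at this
  exact this.le



/-- bound |f x - x| for a lift -/
theorem aux_bound (f : CircleDeg1Lift) (x : ℝ) : |f x - x| ≤ |f 0| + 1 := by
  refine f.forall_map_sub_of_Icc (fun a => |a| ≤ |f 0| + 1) (fun y hy => ?_) x
  obtain ⟨hy0, hy1⟩ := hy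
  have h1 : f 0 ≤ f y := f.mono hy0
  have h2 : f y ≤ f 1 := f.mono hy1
  have h3 : f (1 : ℝ) = f 0 + 1 := by
    have := f.map_add_one 0; simpa using this
  rw [abs_le]
  constructor
  · have := neg_abs_le (f 0); nlinarith [abs_nonneg (f 0)]
  · have := le_abs_self (f 0); nlinarith [abs_nonneg (f 0)]





/-- Analytic monotone approximation of a continuous lift. -/
theorem aux_analytic_approx (f : CircleDeg1Lift) (hf : Continuous f) {c : ℝ} (hc : 0 < c) :
    ∃ g : ℝ → ℝ, ContDiff ℝ (⊤ : ℕ∞) g ∧ Monotone g ∧ (∀ x, g (x + 1) = g x + 1) ∧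
      ∀ x, |g x - f x| ≤ c := by
  obtain ⟨δ₀, hδ₀, hδf⟩ := aux_unif f hf (half_pos hc)
  set δ : ℝ := min (δ₀ / 2) 4⁻¹ with hδdef
  have hδpos : 0 < δ := lt_min (by linarith) (by norm_num)
  have hδ4 : δ ≤ 4⁻¹ := min_le_right _ _
  have hδlt : δ < δ₀ := lt_of_le_of_lt (min_le_left _ _) (by linarith)
  set γ : ℝ := Real.cos (π * δ / 2) with hγdef
  set β : ℝ := Real.cos (π * δ) with hβdef
  have hπpos := Real.pi_pos
  have hπδ : π * δ < π / 2 := by nlinarith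
  have hβpos : 0 < β := Real.cos_pos_of_mem_Ioo ⟨by nlinarith, hπδ⟩
  have hβγ : β < γ := by
    apply Real.cos_lt_cos_of_nonneg_of_le_pi
    · positivity
    · nlinarith
    · nlinarith
  have hγpos : 0 < γ := lt_trans hβpos hβγ
  have hγ1 : γ ≤ 1 := Real.cos_le_one _
  set M : ℝ := |f 0| + 1 with hMdef
  have hM1 : 1 ≤ M := by simp only [hMdef]; linarith [abs_nonneg (f 0)]
  set R : ℝ := 2 * M + 1 with hRdef
  have hRpos : 0 < R := by linarith
  have hr1 : (β / γ) ^ 2 < 1 :=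
    pow_lt_one₀ (by positivity) ((div_lt_one hγpos).mpr hβγ) (by norm_num)
  obtain ⟨n, hn⟩ : ∃ n : ℕ, R * ((β / γ) ^ 2) ^ n / δ ≤ c / 2 := by
    have h2 : ∀ᶠ m : ℕ in atTop, ((β / γ) ^ 2) ^ m < c / 2 * δ / R :=
      (tendsto_pow_atTop_nhds_zero_of_lt_one (by positivity) hr1).eventually_lt_const
        (by positivity)
    obtain ⟨m, hm⟩ := h2.exists
    refine ⟨m, ?_⟩
    rw [lt_div_iff₀ hRpos] at hm
    rw [div_le_iff₀ hδpos]
    nlinarith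
  -- the kernel
  set N : ℕ := 2 * n with hN
  have hEven : Even N := ⟨n, by omega⟩
  set Kf : ℝ → ℝ := fun t => Real.cos (π * t) ^ N with hKf
  have hKc : Continuous Kf := (Real.continuous_cos.comp (continuous_const.mul continuous_id)).pow N
  have hKnonneg : ∀ t, 0 ≤ Kf t := fun t => hEven.pow_nonneg _
  have hKper : ∀ t, Kf (t + 1) = Kf t := by
    intro t
    simp only [hKf, mul_add, mul_one, Real.cos_add_pi, hEven.neg_pow]
  -- the total mass
  set I : ℝ := ∫ t in (-2⁻¹ : ℝ)..2⁻¹, Kf t with hI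
  have hIlow : δ * γ ^ N ≤ I := by
    have h1 : δ * γ ^ N = ∫ _t in (-(δ/2))..(δ/2), γ ^ N := by
      rw [intervalIntegral.integral_const, smul_eq_mul]; ring_nf
    have h2 : (∫ _t in (-(δ/2))..(δ/2), γ ^ N) ≤ ∫ t in (-(δ/2))..(δ/2), Kf t := by
      refine integral_mono_on (by linarith) intervalIntegrable_const
        (hKc.intervalIntegrable _ _) fun t ht => ?_
      obtain ⟨ht1, ht2⟩ := ht
      have habs : |π * t| ≤ π * δ / 2 := by
        rw [abs_mul, abs_of_pos hπpos]
        have ht3 : |t| ≤ δ / 2 := abs_le.mpr ⟨by linarith, ht2⟩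
        nlinarith [abs_nonneg t]
      have hcos : γ ≤ Real.cos (π * t) := by
        rw [← Real.cos_abs (π * t)]
        exact Real.cos_le_cos_of_nonneg_of_le_pi (abs_nonneg _) (by nlinarith) habs
      exact pow_le_pow_left₀ hγpos.le hcos N
    have h3 : (∫ t in (-(δ/2))..(δ/2), Kf t) ≤ I := by
      refine integral_mono_interval (by norm_num; linarith) (by linarith) (by norm_num; linarith)
        (Eventually.of_forall fun t => hKnonneg t) (hKc.intervalIntegrable _ _)
    linarith [h1 ▸ h2]
  have hIpos : 0 < I := lt_of_lt_of_le (by positivity) hIlow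
  -- the convolution
  set conv : ℝ → ℝ := fun x => ∫ t in (-2⁻¹ : ℝ)..2⁻¹, Kf t * f (x - t) with hconv
  have hcint : ∀ (x a b : ℝ), IntervalIntegrable (fun t => Kf t * f (x - t)) volume a b :=
    fun x a b => ((hKc.mul (hf.comp (continuous_const.sub continuous_id))).intervalIntegrable a b)
  set g : ℝ → ℝ := fun x => conv x / I with hg
  have hmono : Monotone g := by
    intro x y hxy
    have : conv x ≤ conv y := by
      refine integral_mono_on (by norm_num) (hcint x _ _) (hcint y _ _) fun t _ =>
        mul_le_mul_of_nonneg_left (f.mono (by linarith)) (hKnonneg t)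
    exact div_le_div_of_nonneg_right this hIpos.le
  have hmap1 : ∀ x, g (x + 1) = g x + 1 := by
    intro x
    have hstep : conv (x + 1) = conv x + I := by
      have heq : ∀ t : ℝ, Kf t * f (x + 1 - t) = Kf t * f (x - t) + Kf t := by
        intro t
        have h0 : x + 1 - t = (x - t) + 1 := by ring
        rw [h0, f.map_add_one]; ring
      calc conv (x + 1) = ∫ t in (-2⁻¹ : ℝ)..2⁻¹, (Kf t * f (x - t) + Kf t) :=
            integral_congr fun t _ => heq t
        _ = conv x + I := integral_add (hcint x _ _) (hKc.intervalIntegrable _ _)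
    simp only [hg, hstep, add_div, div_self hIpos.ne']
  have herr : ∀ x, |g x - f x| ≤ c := by
    intro x
    -- pointwise bounds for the integrand
    set D : ℝ → ℝ := fun t => Kf t * (f (x - t) - f x) with hD
    have hDc : Continuous D :=
      hKc.mul ((hf.comp (continuous_const.sub continuous_id)).sub continuous_const)
    have hDint : ∀ a b : ℝ, IntervalIntegrable D volume a b := fun a b => hDc.intervalIntegrable a b
    have hDabs : ∀ t : ℝ, |t| ≤ 2⁻¹ → |f (x - t) - f x| ≤ R := by
      intro t ht
      have h1 := aux_bound f (x - t)
      have h2 := aux_bound f x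
      have h3 : |f (x - t) - f x| ≤ |f (x-t) - (x-t)| + |t| + |f x - x| := by
        have h4 : f (x - t) - f x = (f (x-t) - (x-t)) + (-t) + (-(f x - x)) := by ring
        rw [h4]
        refine (abs_add_three _ _ _).trans ?_
        simp only [abs_neg, le_refl]
      simp only [hRdef]
      calc |f (x - t) - f x| ≤ |f (x-t) - (x-t)| + |t| + |f x - x| := h3
        _ ≤ M + 2⁻¹ + M := by gcongr <;> simp [hMdef, h1, h2, ht]
        _ ≤ 2 * M + 1 := by linarith
    have hKside : ∀ t : ℝ, δ ≤ |t| → |t| ≤ 2⁻¹ → Kf t ≤ β ^ N := by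
      intro t ht1 ht2
      have hc1 : Kf t = Real.cos |π * t| ^ N := by
        simp only [hKf, Real.cos_abs]
      rw [hc1]
      have h5 : |π * t| ≤ π := by
        rw [abs_mul, abs_of_pos hπpos]; nlinarith
      have h6 : π * δ ≤ |π * t| := by
        rw [abs_mul, abs_of_pos hπpos]; nlinarith
      have h7 : Real.cos |π * t| ≤ β :=
        Real.cos_le_cos_of_nonneg_of_le_pi (by positivity) h5 h6
      have h8 : 0 ≤ Real.cos |π * t| := by
        apply Real.cos_nonneg_of_mem_Icc
        constructor
        · linarith [abs_nonneg (π * t)]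
        · rw [abs_mul, abs_of_pos hπpos]; nlinarith
      exact pow_le_pow_left₀ h8 h7 N
    -- splitting the integral
    have hsplit : (∫ t in (-2⁻¹ : ℝ)..2⁻¹, D t) =
        (∫ t in (-2⁻¹ : ℝ)..(-δ), D t) + (∫ t in (-δ : ℝ)..δ, D t) + (∫ t in (δ : ℝ)..2⁻¹, D t) := by
      rw [integral_add_adjacent_intervals (hDint _ _) (hDint _ _),
        integral_add_adjacent_intervals (hDint _ _) (hDint _ _)]
    have hIdentity : conv x - f x * I = ∫ t in (-2⁻¹ : ℝ)..2⁻¹, D t := by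
      have : (∫ t in (-2⁻¹ : ℝ)..2⁻¹, D t)
          = (∫ t in (-2⁻¹ : ℝ)..2⁻¹, Kf t * f (x - t)) - ∫ t in (-2⁻¹ : ℝ)..2⁻¹, Kf t * f x := by
        rw [← integral_sub (g := fun t => Kf t * f x) (hcint x _ _) ((hKc.mul continuous_const).intervalIntegrable _ _)]
        exact integral_congr fun t _ => by simp only [hD]; ring
      rw [this, intervalIntegral.integral_mul_const]
      rw [mul_comm]
    have hside1 : |∫ t in (-2⁻¹ : ℝ)..(-δ), D t| ≤ β ^ N * R * 2⁻¹ := by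
      have h9 : ∀ t ∈ Set.uIoc (-2⁻¹ : ℝ) (-δ), ‖D t‖ ≤ β ^ N * R := by
        intro t ht
        rw [Set.uIoc_of_le (by linarith)] at ht
        obtain ⟨ht1, ht2⟩ := ht
        have habs : |t| ≤ 2⁻¹ := abs_le.mpr ⟨by linarith, by linarith⟩
        have habs2 : δ ≤ |t| := by rw [abs_of_nonpos (by linarith)]; linarith
        rw [Real.norm_eq_abs, hD, abs_mul, abs_of_nonneg (hKnonneg t)]
        exact mul_le_mul (hKside t habs2 habs) (hDabs t habs) (abs_nonneg _)
          (by positivity)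
      calc |∫ t in (-2⁻¹ : ℝ)..(-δ), D t| ≤ β ^ N * R * |(-δ) - (-2⁻¹)| := by
            simpa [Real.norm_eq_abs] using intervalIntegral.norm_integral_le_of_norm_le_const h9
        _ ≤ β ^ N * R * 2⁻¹ := by
            rw [abs_of_nonneg (by linarith)]
            have h30 : (0:ℝ) ≤ β ^ N * R := by positivity
            nlinarith [mul_nonneg h30 hδpos.le]
    have hside2 : |∫ t in (δ : ℝ)..2⁻¹, D t| ≤ β ^ N * R * 2⁻¹ := by
      have h9 : ∀ t ∈ Set.uIoc (δ : ℝ) 2⁻¹, ‖D t‖ ≤ β ^ N * R := by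
        intro t ht
        rw [Set.uIoc_of_le (by linarith)] at ht
        obtain ⟨ht1, ht2⟩ := ht
        have habs : |t| ≤ 2⁻¹ := abs_le.mpr ⟨by linarith, by linarith⟩
        have habs2 : δ ≤ |t| := by rw [abs_of_pos (by linarith)]; linarith
        rw [Real.norm_eq_abs, hD, abs_mul, abs_of_nonneg (hKnonneg t)]
        exact mul_le_mul (hKside t habs2 habs) (hDabs t habs) (abs_nonneg _) (by positivity)
      calc |∫ t in (δ : ℝ)..2⁻¹, D t| ≤ β ^ N * R * |2⁻¹ - δ| := by
            simpa [Real.norm_eq_abs] using intervalIntegral.norm_integral_le_of_norm_le_const h9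
        _ ≤ β ^ N * R * 2⁻¹ := by
            rw [abs_of_nonneg (by linarith)]
            have h30 : (0:ℝ) ≤ β ^ N * R := by positivity
            nlinarith [mul_nonneg h30 hδpos.le]
    have hmid : |∫ t in (-δ : ℝ)..δ, D t| ≤ c / 2 * I := by
      have h10 : |∫ t in (-δ : ℝ)..δ, D t| ≤ ∫ t in (-δ : ℝ)..δ, |D t| := by
        simpa [Real.norm_eq_abs] using
          intervalIntegral.norm_integral_le_integral_norm (f := D) (by linarith : (-δ:ℝ) ≤ δ)
      have h11 : (∫ t in (-δ : ℝ)..δ, |D t|) ≤ ∫ t in (-δ : ℝ)..δ, Kf t * (c/2) := by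
        refine integral_mono_on (by linarith) (hDc.abs.intervalIntegrable _ _)
          ((hKc.mul continuous_const).intervalIntegrable _ _) fun t ht => ?_
        obtain ⟨ht1, ht2⟩ := ht
        rw [hD, abs_mul, abs_of_nonneg (hKnonneg t)]
        refine mul_le_mul_of_nonneg_left ?_ (hKnonneg t)
        refine hδf x (x - t) ?_
        have : |x - t - x| = |t| := by rw [show x - t - x = -t by ring, abs_neg]
        rw [this]
        exact lt_of_le_of_lt (abs_le.mpr ⟨by linarith, ht2⟩) hδlt
      have h12 : (∫ t in (-δ : ℝ)..δ, Kf t * (c/2)) ≤ c / 2 * I := by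
        rw [intervalIntegral.integral_mul_const]
        have h13 : (∫ t in (-δ : ℝ)..δ, Kf t) ≤ I :=
          integral_mono_interval (by norm_num; linarith) (by linarith) (by norm_num; linarith)
            (Eventually.of_forall fun t => hKnonneg t) (hKc.intervalIntegrable _ _)
        have h14 : (0:ℝ) < c/2 := by linarith
        nlinarith
      linarith
    have htotal : |conv x - f x * I| ≤ c / 2 * I + β ^ N * R := by
      rw [hIdentity, hsplit]
      calc |(∫ t in (-2⁻¹ : ℝ)..(-δ), D t) + (∫ t in (-δ : ℝ)..δ, D t) + ∫ t in (δ : ℝ)..2⁻¹, D t|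
          ≤ |(∫ t in (-2⁻¹ : ℝ)..(-δ), D t) + (∫ t in (-δ : ℝ)..δ, D t)| + |∫ t in (δ : ℝ)..2⁻¹, D t| :=
            abs_add_le _ _
        _ ≤ |∫ t in (-2⁻¹ : ℝ)..(-δ), D t| + |∫ t in (-δ : ℝ)..δ, D t| + |∫ t in (δ : ℝ)..2⁻¹, D t| :=
            add_le_add_left (abs_add_le _ _) _
        _ ≤ β ^ N * R * 2⁻¹ + c / 2 * I + β ^ N * R * 2⁻¹ := by
            gcongr
        _ = c / 2 * I + β ^ N * R := by ring
    have hfinal : |g x - f x| ≤ c := by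
      have hgx : g x - f x = (conv x - f x * I) / I := by
        rw [hg]; field_simp
      rw [hgx, abs_div, abs_of_pos hIpos]
      rw [div_le_iff₀ hIpos]
      have hβN : β ^ N * R / I ≤ c / 2 := by
        have hIN : δ * γ ^ N ≤ I := hIlow
        have h20 : β ^ N * R / I ≤ β ^ N * R / (δ * γ ^ N) := by
          apply div_le_div_of_nonneg_left (by positivity) (by positivity) hIN
        have h21 : β ^ N * R / (δ * γ ^ N) = R * ((β/γ)^2)^n / δ := by
          rw [← pow_mul, ← hN, div_pow]
          field_simp
        rw [h21] at h20
        exact h20.trans hn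
      rw [div_le_iff₀ hIpos] at hβN
      nlinarith [htotal]
    exact hfinal
  -- analyticity: `g` is a trigonometric polynomial plus a linear map
  set Ψ : ℝ → ℝ := fun u => f u - u with hΨ
  have hΨc : Continuous Ψ := hf.sub continuous_id
  have hΨper : ∀ u, Ψ (u + 1) = Ψ u := fun u => by
    simp only [hΨ, f.map_add_one]; ring
  set m : ℝ := ∫ t in (-2⁻¹ : ℝ)..2⁻¹, Kf t * t with hm
  set d : ℕ → ℝ := fun k =>
    ∫ u in (0:ℝ)..1, Real.cos (π * u) ^ k * Real.sin (π * u) ^ (N - k) * Ψ u with hd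
  have hconv_eq : ∀ x : ℝ, conv x = x * I - m +
      ∑ k ∈ Finset.range (N + 1),
        (N.choose k : ℝ) * d k * Real.cos (π * x) ^ k * Real.sin (π * x) ^ (N - k) := by
    intro x
    have hs1 : conv x = (x * I - m) + ∫ t in (-2⁻¹ : ℝ)..2⁻¹, Kf t * Ψ (x - t) := by
      have h40 : ∀ t : ℝ, Kf t * f (x - t) = (Kf t * x - Kf t * t) + Kf t * Ψ (x - t) := by
        intro t; simp only [hΨ]; ring
      have h41 : conv x = ∫ t in (-2⁻¹ : ℝ)..2⁻¹, ((Kf t * x - Kf t * t) + Kf t * Ψ (x - t)) :=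
        integral_congr fun t _ => h40 t
      have int1 : IntervalIntegrable (fun t : ℝ => Kf t * x - Kf t * t) volume (-2⁻¹) 2⁻¹ := by
        apply Continuous.intervalIntegrable; fun_prop
      have int2 : IntervalIntegrable (fun t : ℝ => Kf t * Ψ (x - t)) volume (-2⁻¹) 2⁻¹ := by
        apply Continuous.intervalIntegrable; fun_prop
      have int3 : IntervalIntegrable (fun t : ℝ => Kf t * x) volume (-2⁻¹) 2⁻¹ := by
        apply Continuous.intervalIntegrable; fun_prop
      have int4 : IntervalIntegrable (fun t : ℝ => Kf t * t) volume (-2⁻¹) 2⁻¹ := by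
        apply Continuous.intervalIntegrable; fun_prop
      rw [h41, integral_add int1 int2, integral_sub int3 int4, intervalIntegral.integral_mul_const]
      rw [mul_comm]
    set G : ℝ → ℝ := fun u => Kf (x - u) * Ψ u with hG
    have hGc : Continuous G := (hKc.comp (continuous_const.sub continuous_id)).mul hΨc
    have h42 : ∀ t : ℝ, Kf t * Ψ (x - t) = G (x - t) := by
      intro t; simp only [hG, sub_sub_cancel]
    have h43 : (∫ t in (-2⁻¹ : ℝ)..2⁻¹, Kf t * Ψ (x - t)) = ∫ u in (x - 2⁻¹)..(x + 2⁻¹), G u := by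
      rw [integral_congr fun t _ => h42 t, integral_comp_sub_left G x]
      norm_num
    have hGper : Function.Periodic G 1 := by
      intro u
      simp only [hG, hΨper]
      have h44 : x - (u + 1) = x - u - 1 := by ring
      rw [h44]
      have h45 := hKper (x - u - 1)
      rw [sub_add_cancel] at h45
      rw [h45]
    have h45 : (∫ u in (x - 2⁻¹)..(x + 2⁻¹), G u) = ∫ u in (0:ℝ)..1, G u := by
      have h46 := hGper.intervalIntegral_add_eq (x - 2⁻¹) 0
      simpa [show x - 2⁻¹ + 1 = x + 2⁻¹ by ring] using h46
    have h47 : ∀ u : ℝ, G u = ∑ k ∈ Finset.range (N + 1),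
        (Real.cos (π * x) ^ k * Real.sin (π * x) ^ (N - k)) *
          ((N.choose k : ℝ) * (Real.cos (π * u) ^ k * Real.sin (π * u) ^ (N - k) * Ψ u)) := by
      intro u
      have hcs : Real.cos (π * (x - u)) =
          Real.cos (π * x) * Real.cos (π * u) + Real.sin (π * x) * Real.sin (π * u) := by
        rw [mul_sub, Real.cos_sub]
      simp only [hG, hKf]
      rw [hcs, add_pow, Finset.sum_mul]
      refine Finset.sum_congr rfl fun k hk => ?_
      rw [mul_pow, mul_pow]
      push_cast
      ring
    have h48 : (∫ u in (0:ℝ)..1, G u) = ∑ k ∈ Finset.range (N + 1),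
        (N.choose k : ℝ) * d k * Real.cos (π * x) ^ k * Real.sin (π * x) ^ (N - k) := by
      rw [integral_congr fun u _ => h47 u]
      rw [intervalIntegral.integral_finset_sum (fun k _ => by
        apply Continuous.intervalIntegrable
        fun_prop)]
      refine Finset.sum_congr rfl fun k hk => ?_
      rw [intervalIntegral.integral_const_mul, intervalIntegral.integral_const_mul]
      simp only [hd]
      ring
    rw [hs1, h43, h45, h48]
  have hganal : ContDiff ℝ (⊤ : ℕ∞) g := by
    have hgfun : g = fun x => (x * I - m + ∑ k ∈ Finset.range (N + 1),
        (N.choose k : ℝ) * d k * Real.cos (π * x) ^ k * Real.sin (π * x) ^ (N - k)) / I := by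
      funext x
      simp only [hg]
      rw [hconv_eq x]
    rw [hgfun]
    have hcos : ContDiff ℝ (⊤ : ℕ∞) fun x : ℝ => Real.cos (π * x) :=
      Real.contDiff_cos.comp (contDiff_const.mul contDiff_id)
    have hsin : ContDiff ℝ (⊤ : ℕ∞) fun x : ℝ => Real.sin (π * x) :=
      Real.contDiff_sin.comp (contDiff_const.mul contDiff_id)
    apply ContDiff.div_const
    apply ContDiff.add
    · exact (contDiff_id.mul contDiff_const).sub contDiff_const
    · apply ContDiff.sum
      intro k _
      exact ((contDiff_const.mul contDiff_const).mul (hcos.pow k)).mul (hsin.pow (N - k))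
  exact ⟨g, hganal, hmono, hmap1, herr⟩



noncomputable def glt (f : CircleDeg1Lift) (t : ℝ) : CircleDeg1Lift :=
  ((translate (Multiplicative.ofAdd t) : CircleDeg1Liftˣ) : CircleDeg1Lift) * f

theorem glt_apply (f : CircleDeg1Lift) (t x : ℝ) : glt f t x = t + f x := rfl

theorem glt_pow_zero (f : CircleDeg1Lift) (t : ℝ) (q : ℕ) :
    ((glt f t) ^ q) 0 = (fun y => t + f y)^[q] 0 := by
  rw [coe_pow]; rfl

theorem glt_iter_cont (f : CircleDeg1Lift) (hf : Continuous f) (q : ℕ) :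
    Continuous fun t : ℝ => (fun y => t + f y)^[q] 0 := by
  induction q with
  | zero => simpa using continuous_const
  | succ k ih =>
    simp only [Function.iterate_succ_apply']
    exact continuous_id.add (hf.comp ih)

theorem aux_tn_le (f : CircleDeg1Lift) (hf : Continuous f) {s : Set ℝ} {t₀ r : ℝ}
    (ht : t₀ ∈ closure s) (H : ∀ t ∈ s, (glt f t).translationNumber ≤ r) :
    (glt f t₀).translationNumber ≤ r := by
  by_contra hlt
  push_neg at hlt
  obtain ⟨ρ, hρ1, hρ2⟩ := exists_rat_btwn hlt
  set q : ℕ := ρ.den with hqdef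
  set p : ℤ := ρ.num with hpdef
  have hq : (0:ℝ) < (q:ℝ) := by exact_mod_cast ρ.pos
  have hρcast : (ρ : ℝ) = (p : ℝ) / (q : ℝ) := by rw [Rat.cast_def]
  have key1 : ∀ t ∈ s, ((glt f t) ^ q) 0 < 0 + (p : ℝ) := by
    intro t hts
    have h1 : (glt f t).translationNumber < (p : ℝ) / (q : ℝ) := by
      rw [← hρcast]; exact lt_of_le_of_lt (H t hts) hρ1
    have h2 : ((glt f t) ^ q).translationNumber < (p : ℝ) := by
      rw [translationNumber_pow]
      rw [lt_div_iff₀ hq] at h1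
      linarith [h1]
    exact_mod_cast map_lt_of_translationNumber_lt_int _ h2 0
  have hne : (𝓝[s] t₀).NeBot := mem_closure_iff_nhdsWithin_neBot.mp ht
  have htd : Tendsto (fun t => ((glt f t) ^ q) 0) (𝓝[s] t₀) (𝓝 (((glt f t₀) ^ q) 0)) := by
    have h3 : (fun t => ((glt f t) ^ q) 0) = fun t => (fun y => t + f y)^[q] 0 := by
      funext t; exact glt_pow_zero f t q
    rw [h3, glt_pow_zero]
    exact ((glt_iter_cont f hf q).continuousWithinAt).tendsto
  have h4 : ((glt f t₀) ^ q) 0 ≤ 0 + (p : ℝ) :=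
    le_of_tendsto htd (eventually_nhdsWithin_of_forall fun t hts => (key1 t hts).le)
  have h5 : ((glt f t₀) ^ q).translationNumber ≤ (p : ℝ) := by
    have h4' : ((glt f t₀) ^ q) 0 ≤ 0 + ((p : ℤ) : ℝ) := by exact_mod_cast h4
    exact_mod_cast translationNumber_le_of_le_add_int _ h4'
  rw [translationNumber_pow] at h5
  have h6 : (glt f t₀).translationNumber ≤ (ρ : ℝ) := by
    rw [hρcast, le_div_iff₀ hq]
    linarith
  linarith

theorem aux_tn_ge (f : CircleDeg1Lift) (hf : Continuous f) {s : Set ℝ} {t₀ r : ℝ}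
    (ht : t₀ ∈ closure s) (H : ∀ t ∈ s, r ≤ (glt f t).translationNumber) :
    r ≤ (glt f t₀).translationNumber := by
  by_contra hlt
  push_neg at hlt
  obtain ⟨ρ, hρ1, hρ2⟩ := exists_rat_btwn hlt
  set q : ℕ := ρ.den with hqdef
  set p : ℤ := ρ.num with hpdef
  have hq : (0:ℝ) < (q:ℝ) := by exact_mod_cast ρ.pos
  have hρcast : (ρ : ℝ) = (p : ℝ) / (q : ℝ) := by rw [Rat.cast_def]
  have key1 : ∀ t ∈ s, (0:ℝ) + (p : ℝ) < ((glt f t) ^ q) 0 := by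
    intro t hts
    have h1 : (p : ℝ) / (q : ℝ) < (glt f t).translationNumber := by
      rw [← hρcast]; exact lt_of_lt_of_le hρ2 (H t hts)
    have h2 : (p : ℝ) < ((glt f t) ^ q).translationNumber := by
      rw [translationNumber_pow]
      rw [div_lt_iff₀ hq] at h1
      linarith [h1]
    exact_mod_cast lt_map_of_int_lt_translationNumber _ (by exact_mod_cast h2) 0
  have hne : (𝓝[s] t₀).NeBot := mem_closure_iff_nhdsWithin_neBot.mp ht
  have htd : Tendsto (fun t => ((glt f t) ^ q) 0) (𝓝[s] t₀) (𝓝 (((glt f t₀) ^ q) 0)) := by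
    have h3 : (fun t => ((glt f t) ^ q) 0) = fun t => (fun y => t + f y)^[q] 0 := by
      funext t; exact glt_pow_zero f t q
    rw [h3, glt_pow_zero]
    exact ((glt_iter_cont f hf q).continuousWithinAt).tendsto
  have h4 : (0:ℝ) + (p : ℝ) ≤ ((glt f t₀) ^ q) 0 :=
    ge_of_tendsto htd (eventually_nhdsWithin_of_forall fun t hts => (key1 t hts).le)
  have h5 : (p : ℝ) ≤ ((glt f t₀) ^ q).translationNumber := by
    have h4' : (0:ℝ) + ((p : ℤ) : ℝ) ≤ ((glt f t₀) ^ q) 0 := by exact_mod_cast h4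
    exact_mod_cast le_translationNumber_of_add_int_le _ h4'
  rw [translationNumber_pow] at h5
  have h6 : (ρ : ℝ) ≤ (glt f t₀).translationNumber := by
    rw [hρcast, div_le_iff₀ hq]
    linarith
  linarith









/-- Every lift of an orientation-preserving circle homeomorphism can be `C⁰`-approximated,
to within any `ε > 0`, by a `C^∞` diffeomorphism lift (a smooth lift with everywhere
positive derivative) having the same translation number. -/
theorem exists_smooth_approx_same_translationNumber (φ : CircleDeg1Liftˣ) (ε : ℝ) (hε : 0 < ε) :
    ∃ ψ : CircleDeg1Liftˣ,
      ContDiff ℝ (⊤ : ℕ∞) ((ψ : CircleDeg1Lift) : ℝ → ℝ) ∧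
      (∀ x : ℝ, 0 < deriv ((ψ : CircleDeg1Lift) : ℝ → ℝ) x) ∧
      (∀ x : ℝ, |(ψ : CircleDeg1Lift) x - (φ : CircleDeg1Lift) x| < ε) ∧
      (ψ : CircleDeg1Lift).translationNumber = (φ : CircleDeg1Lift).translationNumber := by
  set φl : CircleDeg1Lift := (φ : CircleDeg1Lift) with hφl
  have hφcont : Continuous ⇑φl := by
    have h := (toOrderIso φ).continuous
    rwa [coe_toOrderIso φ] at h
  set c : ℝ := ε / 2 with hc
  have hcpos : 0 < c := by positivity
  obtain ⟨χ, hχs, hχm, hχ1, hχerr⟩ := aux_analytic_approx φl hφcont (by positivity : 0 < c / 4)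
  set M : ℝ := |φl 0| + 1 with hM
  have hM1 : (1:ℝ) ≤ M := by simp only [hM]; linarith [abs_nonneg (φl 0)]
  have hMx : ∀ x, |φl x - x| ≤ M := fun x => aux_bound φl x
  set K : ℝ := M + c / 4 with hK
  have hKpos : (0:ℝ) < K := by simp only [hK]; linarith
  have hχx : ∀ x, |x - χ x| ≤ K := by
    intro x
    have h1 : x - χ x = -(φl x - x) + -(χ x - φl x) := by ring
    rw [h1]
    calc |(-(φl x - x)) + -(χ x - φl x)| ≤ |(-(φl x - x))| + |(-(χ x - φl x))| := abs_add_le _ _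
      _ = |φl x - x| + |χ x - φl x| := by rw [abs_neg, abs_neg]
      _ ≤ M + c / 4 := add_le_add (hMx x) (hχerr x)
  set η : ℝ := min 2⁻¹ (c / (4 * K)) with hη
  have hη0 : 0 < η := lt_min (by norm_num) (by positivity)
  have hη1 : η ≤ 2⁻¹ := min_le_left _ _
  have hηK : η * K ≤ c / 4 := by
    have h1 : η ≤ c / (4 * K) := min_le_right _ _
    rw [le_div_iff₀ (by positivity)] at h1
    ring_nf at h1 ⊢
    linarith
  set ψf : ℝ → ℝ := fun x => η * x + (1 - η) * χ x - c / 2 with hψf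
  have hψs : ContDiff ℝ (⊤ : ℕ∞) ψf :=
    ((contDiff_const.mul contDiff_id).add (contDiff_const.mul hχs)).sub contDiff_const
  have hχdiff : Differentiable ℝ χ := hχs.differentiable (by simp)
  have hψder : ∀ x, HasDerivAt ψf (η * 1 + (1 - η) * deriv χ x) x := by
    intro x
    exact (((hasDerivAt_id x).const_mul η).add ((hχdiff x).hasDerivAt.const_mul (1 - η))).sub_const _
  have hψderiv : ∀ x, deriv ψf x = η * 1 + (1 - η) * deriv χ x := fun x => (hψder x).deriv
  have hψpos : ∀ x, 0 < deriv ψf x := by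
    intro x
    rw [hψderiv x]
    have h1 : 0 ≤ deriv χ x := aux_monotone_deriv_nonneg hχm x
    nlinarith
  have hsm : StrictMono ψf := strictMono_of_deriv_pos hψpos
  have hmap1 : ∀ x, ψf (x + 1) = ψf x + 1 := by
    intro x
    simp only [hψf, hχ1]
    ring
  have hmid : ∀ x, |η * x + (1 - η) * χ x - φl x| ≤ c / 2 := by
    intro x
    have h1 : η * x + (1 - η) * χ x - φl x = η * (x - χ x) + (χ x - φl x) := by ring
    rw [h1]
    calc |η * (x - χ x) + (χ x - φl x)| ≤ |η * (x - χ x)| + |χ x - φl x| := abs_add_le _ _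
      _ ≤ η * K + c / 4 := by
          rw [abs_mul, abs_of_pos hη0]
          exact add_le_add (mul_le_mul_of_nonneg_left (hχx x) hη0.le) (hχerr x)
      _ ≤ c / 2 := by linarith
  have hub : ∀ x, ψf x ≤ φl x := by
    intro x
    have := (abs_le.mp (hmid x)).2
    simp only [hψf]; linarith
  have hlb : ∀ x, φl x ≤ ψf x + c := by
    intro x
    have := (abs_le.mp (hmid x)).1
    simp only [hψf]; linarith
  -- surjectivity and the unit
  have hsurj : Surjective ψf := by
    refine Continuous.surjective hψs.continuous ?_ ?_
    · refine tendsto_atTop_mono (fun x => ?_) (tendsto_atTop_add_const_right atTop (-(M + c)) tendsto_id)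
      have h1 := (abs_le.mp (hMx x)).1
      have h2 := hlb x
      simp only [id_eq]
      linarith
    · refine tendsto_atBot_mono (fun x => ?_) (tendsto_atBot_add_const_right atBot M tendsto_id)
      have h1 := (abs_le.mp (hMx x)).2
      have h2 := hub x
      simp only [id_eq]
      linarith
  set ψl : CircleDeg1Lift := ⟨⟨ψf, hsm.monotone⟩, hmap1⟩ with hψl
  have hψlapp : ∀ x, ψl x = ψf x := fun _ => rfl
  have hψcont : Continuous ⇑ψl := hψs.continuous
  have hunit : IsUnit ψl := isUnit_iff_bijective.mpr ⟨hsm.injective, hsurj⟩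
  -- the IVT for the translation number
  set y : ℝ := φl.translationNumber with hy
  set S : Set ℝ := {t | t ∈ Icc 0 c ∧ (glt ψl t).translationNumber ≤ y} with hS
  have h0S : (0:ℝ) ∈ S := by
    refine ⟨⟨le_refl 0, hcpos.le⟩, ?_⟩
    have hle0 : glt ψl 0 ≤ φl := fun x => by
      rw [glt_apply, hψlapp]; linarith [hub x]
    exact translationNumber_mono hle0
  have hSbdd : BddAbove S := ⟨c, fun t ht => ht.1.2⟩
  have hSne : S.Nonempty := ⟨0, h0S⟩
  set t₀ : ℝ := sSup S with ht₀
  have ht₀mem : t₀ ∈ Icc (0:ℝ) c := ⟨le_csSup hSbdd h0S, csSup_le hSne fun t ht => ht.1.2⟩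
  have hle : (glt ψl t₀).translationNumber ≤ y :=
    aux_tn_le ψl hψcont (csSup_mem_closure hSne hSbdd) (fun t ht => ht.2)
  have hge : y ≤ (glt ψl t₀).translationNumber := by
    rcases eq_or_lt_of_le ht₀mem.2 with heqc | hltc
    · rw [heqc]
      have hlec : φl ≤ glt ψl c := fun x => by
        rw [glt_apply, hψlapp]; linarith [hlb x]
      exact translationNumber_mono hlec
    · refine aux_tn_ge ψl hψcont (s := Ioc t₀ c) ?_ ?_
      · rw [closure_Ioc hltc.ne]
        exact ⟨le_refl _, hltc.le⟩
      · intro t htmem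
        by_contra hyt
        push_neg at hyt
        have htS : t ∈ S := ⟨⟨le_trans ht₀mem.1 htmem.1.le, htmem.2⟩, hyt.le⟩
        exact absurd (le_csSup hSbdd htS) (not_le.mpr htmem.1)
  have heq : (glt ψl t₀).translationNumber = y := le_antisymm hle hge
  -- assemble the final unit
  refine ⟨translate (Multiplicative.ofAdd t₀) * hunit.unit, ?_⟩
  have hcoe : ((translate (Multiplicative.ofAdd t₀) * hunit.unit : CircleDeg1Liftˣ) :
      CircleDeg1Lift) = glt ψl t₀ := by
    rw [Units.val_mul, hunit.unit_spec]
    rfl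
  rw [hcoe]
  have hfun : ⇑(glt ψl t₀) = fun x => t₀ + ψf x := funext fun x => glt_apply ψl t₀ x
  refine ⟨?_, ?_, ?_, ?_⟩
  · rw [hfun]
    exact contDiff_const.add hψs
  · intro x
    rw [hfun, deriv_const_add]
    exact hψpos x
  · intro x
    rw [hfun]
    have h1 := hub x
    have h2 := hlb x
    rw [abs_lt]
    constructor
    · simp only; nlinarith [ht₀mem.1]
    · simp only; nlinarith [ht₀mem.2]
  · rw [heq]
end

section
/- For the word w = aba⁻¹b⁻¹ in F₂ and for any real r, s, if ρ : F₂ → Homeo⁺(S¹)~ is a representation in which ρ(a) is conjugate to the rigid rotation R_r and ρ(b) is conjugate to the rigid rotation R_s, then rot~(ρ(aba⁻¹b⁻¹)) = 0. -/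
/-- If `ρ(a)` is conjugate to the rigid rotation `R_r` and `ρ(b)` is conjugate to the rigid
rotation `R_s`, then the commutator `aba⁻¹b⁻¹` has translation number `0`. -/
theorem rotZ_commutator_eq_zero_of_conj_rotations (r s : ℝ)
    (ρ : FreeGroup Bool →* CircleDeg1Liftˣ)
    (ha : IsConj (CircleDeg1Lift.translate (Multiplicative.ofAdd r)) (ρ genA))
    (hb : IsConj (CircleDeg1Lift.translate (Multiplicative.ofAdd s)) (ρ genB)) :
    rotZ (ρ (genA * genB * genA⁻¹ * genB⁻¹)) = 0 := by
  set T : CircleDeg1Liftˣ := CircleDeg1Lift.translate (Multiplicative.ofAdd r) with hT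
  set A : CircleDeg1Liftˣ := ρ genA
  set B : CircleDeg1Liftˣ := ρ genB
  obtain ⟨c, hc⟩ := ha
  -- `hc : SemiconjBy ↑c T A`, i.e. `↑c * T = A * ↑c` in `CircleDeg1Liftˣ`
  set c' : CircleDeg1Liftˣ := (c : CircleDeg1Liftˣ)
  have hc' : c' * T * c'⁻¹ = A := by
    rw [hc.eq]; group
  -- the commutator
  have hcomm : ρ (genA * genB * genA⁻¹ * genB⁻¹) = A * B * A⁻¹ * B⁻¹ := by
    simp [A, B]
  set E : CircleDeg1Liftˣ := c'⁻¹ * B * c'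
  set D : CircleDeg1Liftˣ := E * T⁻¹ * E⁻¹
  have hconj : c'⁻¹ * (A * B * A⁻¹ * B⁻¹) * c' = T * D := by
    rw [← hc']; simp only [D, E]; group
  -- translation number of D is -r
  have hτT : (T : CircleDeg1Lift).translationNumber = r :=
    CircleDeg1Lift.translationNumber_translate r
  have hτTinv : ((T⁻¹ : CircleDeg1Liftˣ) : CircleDeg1Lift).translationNumber = -r := by
    rw [CircleDeg1Lift.translationNumber_units_inv, hτT]
  have hτD : ((D : CircleDeg1Liftˣ) : CircleDeg1Lift).translationNumber = -r := by
    have := CircleDeg1Lift.translationNumber_conj_eq E ((T⁻¹ : CircleDeg1Liftˣ) : CircleDeg1Lift)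
    have hD : ((D : CircleDeg1Liftˣ) : CircleDeg1Lift)
        = (E : CircleDeg1Lift) * ((T⁻¹ : CircleDeg1Liftˣ) : CircleDeg1Lift)
          * ((E⁻¹ : CircleDeg1Liftˣ) : CircleDeg1Lift) := by
      simp [D, Units.val_mul]
    rw [hD, this, hτTinv]
  -- D is continuous
  have hDcont : Continuous ((D : CircleDeg1Liftˣ) : CircleDeg1Lift) := by
    refine (CircleDeg1Lift.continuous_iff_surjective _).2 ?_
    exact (CircleDeg1Lift.isUnit_iff_bijective.1 ⟨D, rfl⟩).2
  -- a point moved by exactly -r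
  obtain ⟨p, hp⟩ := CircleDeg1Lift.exists_eq_add_translationNumber
    ((D : CircleDeg1Liftˣ) : CircleDeg1Lift) hDcont
  rw [hτD] at hp
  -- T * D fixes p
  have hfix : ((T * D : CircleDeg1Liftˣ) : CircleDeg1Lift) p = p + (0 : ℤ) := by
    have : ((T * D : CircleDeg1Liftˣ) : CircleDeg1Lift) p
        = (T : CircleDeg1Lift) (((D : CircleDeg1Liftˣ) : CircleDeg1Lift) p) := rfl
    rw [this, hp, hT, CircleDeg1Lift.translate_apply]
    push_cast
    ring
  have hτTD : ((T * D : CircleDeg1Liftˣ) : CircleDeg1Lift).translationNumber = 0 := by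
    have := CircleDeg1Lift.translationNumber_of_eq_add_int _ hfix
    simpa using this
  -- conclude by conjugation invariance
  have := CircleDeg1Lift.translationNumber_conj_eq' c'
    ((A * B * A⁻¹ * B⁻¹ : CircleDeg1Liftˣ) : CircleDeg1Lift)
  rw [rotZ, hcomm, ← this]
  have hrw : ((c'⁻¹ : CircleDeg1Liftˣ) : CircleDeg1Lift)
      * ((A * B * A⁻¹ * B⁻¹ : CircleDeg1Liftˣ) : CircleDeg1Lift) * (c' : CircleDeg1Lift)
      = ((T * D : CircleDeg1Liftˣ) : CircleDeg1Lift) := by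
    rw [← hconj]; simp [Units.val_mul]
  rw [hrw, hτTD]
end

section
/- If a, b are lifts of orientation-preserving circle homeomorphisms with rot~(a) = p/q (reduced) and rot~(b) = p'/q, then rot~([a,b]) ≤ 1/q, where [a,b] = aba⁻¹b⁻¹. Moreover if for some point x of a periodic orbit of a the commutator moves x strictly left, then rot~([a,b]) ≤ 0. -/
open CircleDeg1Lift Function

theorem Function.Periodic.apply_eq_apply_zero_of_isCoprime {α : Type*} {f : ℤ → α} {p q : ℤ}
    (hp : Periodic f p) (hq : Periodic f q) (hpq : IsCoprime p q) (n : ℤ) : f n = f 0 := by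
  obtain ⟨a, b, hab⟩ := hpq
  simpa [hab] using ((hp.int_mul a).add_period (hq.int_mul b)).int_mul_eq n

theorem Function.periodic_of_apply_add_le {α : Type*} [PartialOrder α] {D : ℤ → α} {p : ℤ} {q : ℕ}
    (hq : 0 < q) (hle : ∀ n, D (n + p) ≤ D n) (hper : Periodic D q) : Periodic D p := by
  intro n
  have hanti : Antitone fun j : ℕ => D (n + j * p) :=
    antitone_nat_of_succ_le fun j => by simpa [add_mul, add_assoc] using hle (n + j * p)
  have hround : D (n + q * p) = D n := by simpa [mul_comm] using (hper.int_mul p) n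
  refine le_antisymm (by simpa using hanti (Nat.zero_le 1)) ?_
  simpa [hround] using hanti (Nat.one_le_iff_ne_zero.2 hq.ne')

theorem Int.exists_eq_add_const_of_map_add_le {Φ : ℤ → ℤ} {p : ℤ} {q : ℕ} (hq : 0 < q)
    (hpq : IsCoprime p q) (hΦq : ∀ n, Φ (n + q) = Φ n + q) (hΦp : ∀ n, Φ (n + p) ≤ Φ n + p) :
    ∃ c, ∀ n, Φ n = n + c := by
  have hDq : Periodic (fun n => Φ n - n) q := fun n => by simp only [hΦq]; ring
  have hDp : Periodic (fun n => Φ n - n) p :=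
    periodic_of_apply_add_le hq (fun n => by linarith [hΦp n]) hDq
  exact ⟨Φ 0, fun n => by linarith [hDp.apply_eq_apply_zero_of_isCoprime hDq hpq n]⟩

theorem periodic_lt_succ_of_semiconj {α : Type*} [LinearOrder α] {y : ℤ → α} {T : α → α}
    (hT : StrictMono T) {d : ℤ} (h : ∀ n, T (y n) = y (n + d)) :
    Periodic (fun n => y n < y (n + 1)) d := fun n => by
  simp only [add_right_comm n d 1, ← h, hT.lt_iff_lt]

theorem strictMono_of_semiconj_of_isCoprime {α : Type*} [LinearOrder α] {y : ℤ → α}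
    {F T : α → α} (hF : StrictMono F) (hT : StrictMono T) {p q : ℤ} (hpq : IsCoprime p q)
    (hyF : ∀ n, F (y n) = y (n + p)) (hyT : ∀ n, T (y n) = y (n + q)) (hy : ¬Antitone y) :
    StrictMono y := by
  have hconst := (periodic_lt_succ_of_semiconj hF hyF).apply_eq_apply_zero_of_isCoprime
    (periodic_lt_succ_of_semiconj hT hyT) hpq
  by_cases h0 : y 0 < y (0 + 1)
  · exact strictMono_int_of_lt_succ fun n => (hconst n).symm ▸ h0
  · refine absurd (antitone_int_of_succ_le fun n => not_lt.1 ?_) hy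
    exact (hconst n).symm ▸ h0

theorem units_zpow_apply_of_apply_eq_add_int (u : CircleDeg1Liftˣ) {x : ℝ} {m : ℤ}
    (h : u x = x + m) (t : ℤ) : (u ^ t) x = x + (t * m : ℤ) := by
  induction t using Int.induction_on with
  | zero => simp
  | succ t ih =>
    rw [zpow_add_one, Units.val_mul, mul_apply, h, map_add_int, ih]
    push_cast; ring
  | pred t ih =>
    have hinv : (u⁻¹ : CircleDeg1Liftˣ) x = x - m := by
      rw [← units_inv_apply_apply u (x - m), map_sub_int, h, add_sub_cancel_right]
    rw [zpow_sub_one, Units.val_mul, mul_apply, hinv, map_sub_int, ih]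
    push_cast; ring

/-- An enumeration of the lifted periodic orbit in increasing order: with `x₁ < ⋯ < x_q` the
orbit points in one fundamental domain, `y (i + k * q) = x_{i+1} + k` for `0 ≤ i < q`. -/
structure IsOrderedPeriodicOrbit (F : CircleDeg1Lift) (p : ℤ) (q : ℕ) (y : ℤ → ℝ) : Prop where
  strictMono : StrictMono y
  apply_add_period : ∀ n, y (n + q) = y n + 1
  map_apply : ∀ n, F (y n) = y (n + p)

/-- With Bézout coefficients `a * p + b * q = 1`, index `n = (n * a) * p + (n * b) * q` is sent to
`f ^ (n * a)` applied to a periodic point, shifted by `n * b`. -/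
theorem exists_isOrderedPeriodicOrbit (f : CircleDeg1Liftˣ) {p : ℤ} {q : ℕ} (hq : 0 < q)
    (hpq : IsCoprime p q) (hf : (f : CircleDeg1Lift).translationNumber = p / q) :
    ∃ y, IsOrderedPeriodicOrbit f p q y := by
  obtain ⟨x₀, hx₀⟩ := (translationNumber_eq_rat_iff _
    (by simpa using (toOrderIso f).continuous) hq).1 hf
  have hperiod : ∀ k t : ℤ, (f ^ (k + q * t)) x₀ = (f ^ k) x₀ + t * p := by
    intro k t
    have := units_zpow_apply_of_apply_eq_add_int (f ^ (q : ℤ)) (by simpa using hx₀) t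
    rw [zpow_add, zpow_mul, Units.val_mul, mul_apply, this, map_add_int]
    push_cast; ring
  obtain ⟨a, b, hab⟩ := id hpq
  have hab' : (a : ℝ) * p + b * q = 1 := by exact_mod_cast hab
  set y : ℤ → ℝ := fun n => (f ^ (n * a)) x₀ + (n * b : ℤ) with hy
  have hyq : ∀ n, y (n + q) = y n + 1 := fun n => by
    simp only [hy, add_mul, hperiod]
    push_cast
    linear_combination hab'
  have hyp : ∀ n, f (y n) = y (n + p) := fun n => by
    have hexp : (n + p) * a = (1 + n * a) + q * (-b) := by linear_combination hab
    simp only [hy, hexp, hperiod, zpow_one_add, Units.val_mul, mul_apply, map_add_int]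
    push_cast
    ring
  have hnot_anti : ¬Antitone y := fun hanti => by
    have := hanti (Int.natCast_nonneg q)
    rw [← zero_add (q : ℤ), hyq] at this
    linarith
  refine ⟨y, ?_, hyq, hyp⟩
  exact strictMono_of_semiconj_of_isCoprime (toOrderIso f).strictMono
    (strictMono_id.add_const 1) hpq hyp (fun n => (hyq n).symm) hnot_anti

namespace IsOrderedPeriodicOrbit

variable {F : CircleDeg1Lift} {p : ℤ} {q : ℕ} {y : ℤ → ℝ}

theorem period_pos (hy : IsOrderedPeriodicOrbit F p q y) : 0 < q :=
  Nat.pos_of_ne_zero fun h => by simpa [h] using hy.apply_add_period 0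

theorem apply_add_mul (hy : IsOrderedPeriodicOrbit F p q y) (n k : ℤ) :
    y (n + q * k) = y n + k := by
  simpa [mul_comm] using
    AddConstMapClass.map_add_zsmul (⟨y, hy.apply_add_period⟩ : AddConstMap ℤ ℝ q 1) n k

theorem exists_apply_le_lt_apply_succ (hy : IsOrderedPeriodicOrbit F p q y) (z : ℝ) :
    ∃ m, y m ≤ z ∧ z < y (m + 1) := by
  have hbdd : ∃ b, ∀ k, y k ≤ z → k ≤ b := by
    refine ⟨q * (⌊z - y 0⌋ + 1), fun k hk => (hy.strictMono.lt_iff_lt.1 (hk.trans_lt ?_)).le⟩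
    rw [← zero_add (q * _ : ℤ), hy.apply_add_mul]
    push_cast
    linarith [Int.lt_floor_add_one (z - y 0)]
  have hinh : ∃ k, y k ≤ z := by
    refine ⟨q * ⌊z - y 0⌋, ?_⟩
    rw [← zero_add (q * _ : ℤ), hy.apply_add_mul]
    linarith [Int.floor_le (z - y 0)]
  obtain ⟨m, hm, hmax⟩ := Int.exists_greatest_of_bdd hbdd hinh
  exact ⟨m, hm, lt_of_not_ge fun h => by linarith [hmax _ h]⟩

theorem exists_shift_of_map_lt (hy : IsOrderedPeriodicOrbit F p q y) (hpq : IsCoprime p q)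
    {G : CircleDeg1Lift} (hGF : ∀ v, G (F v) < F (G v)) :
    ∃ c : ℤ, ∀ n, y (n + c) ≤ G (y n) ∧ G (y n) < y (n + c + 1) := by
  choose Φ hΦ using fun n => hy.exists_apply_le_lt_apply_succ (G (y n))
  have hle : ∀ {k m : ℤ} {z : ℝ}, y k ≤ z → z < y (m + 1) → k ≤ m := fun h₁ h₂ =>
    Int.lt_add_one_iff.1 (hy.strictMono.lt_iff_lt.1 (h₁.trans_lt h₂))
  have hGq : ∀ n, G (y (n + q)) = G (y n) + 1 := fun n => by
    rw [hy.apply_add_period, map_add_one]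
  have hΦq : ∀ n, Φ (n + q) = Φ n + q := fun n => by
    refine le_antisymm (hle (hΦ _).1 ?_) (hle ?_ (hΦ _).2)
    · rw [hGq, add_right_comm, hy.apply_add_period]
      linarith [(hΦ n).2]
    · rw [hGq, hy.apply_add_period]
      linarith [(hΦ n).1]
  have hΦp : ∀ n, Φ (n + p) ≤ Φ n + p := fun n => by
    refine hle (hΦ _).1 ?_
    calc G (y (n + p)) = G (F (y n)) := by rw [hy.map_apply]
      _ < F (G (y n)) := hGF _
      _ ≤ F (y (Φ n + 1)) := F.mono (hΦ n).2.le
      _ = y (Φ n + p + 1) := by rw [hy.map_apply, add_right_comm]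
  obtain ⟨c, hc⟩ := Int.exists_eq_add_const_of_map_add_le hy.period_pos hpq hΦq hΦp
  exact ⟨c, fun n => hc n ▸ hΦ n⟩

theorem commutator_apply_le {f g : CircleDeg1Liftˣ} (hy : IsOrderedPeriodicOrbit f p q y)
    {c : ℤ} (hc : ∀ n, y (n + c) ≤ g (y n) ∧ g (y n) < y (n + c + 1)) (n : ℤ) :
    (f * g * f⁻¹ * g⁻¹) (y n) ≤ y (n + 1) := by
  have hf_inv : ∀ m, (f⁻¹ : CircleDeg1Liftˣ) (y m) = y (m - p) := fun m => by
    rw [← units_inv_apply_apply f (y (m - p)), hy.map_apply, sub_add_cancel]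
  have hg_inv : (g⁻¹ : CircleDeg1Liftˣ) (y n) ≤ y (n - c) := by
    simpa using (g⁻¹ : CircleDeg1Liftˣ).val.mono (hc (n - c)).1
  have hmid : g (f⁻¹ (g⁻¹ (y n))) < y (n - p + 1) :=
    calc g (f⁻¹ (g⁻¹ (y n))) ≤ g (y (n - c - p)) := by
          rw [← hf_inv]; exact g.val.mono ((f⁻¹ : CircleDeg1Liftˣ).val.mono hg_inv)
      _ < y (n - c - p + c + 1) := (hc _).2
      _ = y (n - p + 1) := by ring_nf
  calc (f * g * f⁻¹ * g⁻¹) (y n) = f (g (f⁻¹ (g⁻¹ (y n)))) := rfl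
    _ ≤ f (y (n - p + 1)) := f.val.mono hmid.le
    _ = y (n + 1) := by rw [hy.map_apply]; ring_nf

theorem translationNumber_le (hy : IsOrderedPeriodicOrbit F p q y) {H : CircleDeg1Lift}
    (hH : ∀ n, H (y n) ≤ y (n + 1)) : H.translationNumber ≤ 1 / q := by
  have hiter : ∀ j : ℕ, (H ^ j) (y 0) ≤ y j := by
    intro j
    induction j with
    | zero => simp
    | succ j ih =>
      rw [pow_succ', mul_apply]
      push_cast
      exact (H.mono ih).trans (hH j)
  have hround : (H ^ q) (y 0) ≤ y 0 + (1 : ℤ) := by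
    simpa [← hy.apply_add_period] using hiter q
  have := translationNumber_le_of_le_add_int _ hround
  rw [translationNumber_pow] at this
  rw [le_div_iff₀ (by exact_mod_cast hy.period_pos)]
  push_cast at this
  linarith

end IsOrderedPeriodicOrbit

theorem rotZ_commutator_le_general (f g : CircleDeg1Liftˣ) (p : ℤ) (q : ℕ) (hq : 0 < q)
    (hred : Nat.Coprime p.natAbs q)
    (hf : rotZ f = (p : ℝ) / q) :
    rotZ (f * g * f⁻¹ * g⁻¹) ≤ 1 / q ∧
      (∀ x : ℝ, ((f : CircleDeg1Lift) ^ q) x = x + p →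
        ((f * g * f⁻¹ * g⁻¹ : CircleDeg1Liftˣ) : CircleDeg1Lift) x < x →
        rotZ (f * g * f⁻¹ * g⁻¹) ≤ 0) := by
  have hnonpos : ∀ x, (f * g * f⁻¹ * g⁻¹) x ≤ x → rotZ (f * g * f⁻¹ * g⁻¹) ≤ 0 :=
    fun x hx => by
      simpa [rotZ] using translationNumber_le_of_le_add_int (m := 0) _ (by simpa using hx)
  refine ⟨?_, fun x _ hx => hnonpos x hx.le⟩
  by_cases hfixed : ∃ x, (f * g * f⁻¹ * g⁻¹) x ≤ x
  · obtain ⟨x, hx⟩ := hfixed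
    exact (hnonpos x hx).trans (by positivity)
  push Not at hfixed
  have hgf : ∀ v, g (f v) < f (g v) := fun v => by simpa [mul_apply] using hfixed (g (f v))
  have hpq : IsCoprime p q := Int.isCoprime_iff_gcd_eq_one.2 hred
  obtain ⟨y, hy⟩ := exists_isOrderedPeriodicOrbit f hq hpq hf
  obtain ⟨c, hc⟩ := hy.exists_shift_of_map_lt hpq hgf
  exact hy.translationNumber_le (hy.commutator_apply_le hc)

/-- If `rot~(f) = p/q` (reduced) and `rot~(g) = p'/q`, then `rot~([f,g]) ≤ 1/q`.
Moreover, if the commutator moves some point `x` of a periodic orbit of `f` strictly to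
the left, then `rot~([f,g]) ≤ 0`. -/
theorem rotZ_commutator_le (f g : CircleDeg1Liftˣ) (p p' : ℤ) (q : ℕ) (hq : 0 < q)
    (hred : Nat.Coprime p.natAbs q)
    (hf : rotZ f = (p : ℝ) / q) (hg : rotZ g = (p' : ℝ) / q) :
    rotZ (f * g * f⁻¹ * g⁻¹) ≤ 1 / q ∧
      (∀ x : ℝ, ((f : CircleDeg1Lift) ^ q) x = x + p →
        ((f * g * f⁻¹ * g⁻¹ : CircleDeg1Liftˣ) : CircleDeg1Lift) x < x →
        rotZ (f * g * f⁻¹ * g⁻¹) ≤ 0) :=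
  rotZ_commutator_le_general f g p q hq hred hf
end

section
/- Suppose w is a positive word in the free group F₂ on a, b. Then R(w,r,s) is monotone nondecreasing in each of r and s: if r ≤ r' and s ≤ s' then R(w,r,s) ≤ R(w,r',s'). -/
/-- A word in `F₂` is positive if it lies in the submonoid generated by `a` and `b`. -/
def IsPositiveWord (w : FreeGroup Bool) : Prop :=
  w ∈ Submonoid.closure ({genA, genB} : Set (FreeGroup Bool))

/-! Given `ρ` with `rot~(ρ a) = r` and `rot~(ρ b) = s`, replace the generators by
`R_c ∘ ρ(a)` and `R_d ∘ ρ(b)` with `c, d ≥ 0` chosen by the intermediate value theorem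
(`c ↦ rot~(R_c ∘ f)` is continuous, being a uniform limit of `c ↦ (R_c ∘ f)ⁿ(0) / n`) so that
the rotation numbers become `r'` and `s'`. The new generators are pointwise larger, so for a
positive word the image of `w` is pointwise larger and has larger translation number. The
supremum defining `R(w,r',s')` is over a set bounded above, since
`rot~(f ∘ g) ≤ rot~ f + rot~ g + 2`. -/

open CircleDeg1Lift Filter

local notation "τ" => CircleDeg1Lift.translationNumber

namespace CircleDeg1Lift

theorem dist_pow_map_zero_div_translationNumber_le (f : CircleDeg1Lift) {n : ℕ} (hn : 0 < n) :
    dist ((f ^ n) 0 / n) (τ f) ≤ 1 / n := by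
  have hn' : (0 : ℝ) < n := Nat.cast_pos.mpr hn
  calc dist ((f ^ n) 0 / n) (τ f) = dist ((f ^ n) 0) (n * τ f) / n := by
        rw [Real.dist_eq, Real.dist_eq, div_sub' hn'.ne', abs_div, abs_of_pos hn']
    _ ≤ 1 / n := by gcongr; exact f.dist_pow_map_zero_mul_translationNumber_le n

theorem continuous_translationNumber_comp {X : Type*} [TopologicalSpace X]
    {F : X → CircleDeg1Lift} (hF : ∀ n : ℕ, Continuous fun x => (F x ^ n) 0) :
    Continuous fun x => τ (F x) := by
  have hunif :
      TendstoUniformly (fun (n : ℕ) x => (F x ^ n) 0 / n) (fun x => τ (F x)) atTop := by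
    rw [Metric.tendstoUniformly_iff]
    intro ε hε
    filter_upwards [tendsto_one_div_atTop_nhds_zero_nat.eventually (gt_mem_nhds hε),
      eventually_gt_atTop 0] with n hnε hn x
    rw [dist_comm]
    exact ((F x).dist_pow_map_zero_div_translationNumber_le hn).trans_lt hnε
  exact hunif.continuous (Eventually.of_forall fun n => (hF n).div_const _).frequently

theorem translationNumber_mul_le (f g : CircleDeg1Lift) : τ (f * g) ≤ τ f + τ g + 2 :=
  translationNumber_le_of_le_add _ fun x => by
    have hf := f.map_lt_add_translationNumber_add_one (g x)
    have hg := g.map_lt_add_translationNumber_add_one x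
    rw [mul_apply]
    linarith

end CircleDeg1Lift

noncomputable def translateMul (c : ℝ) (f : CircleDeg1Liftˣ) : CircleDeg1Liftˣ :=
  translate (Multiplicative.ofAdd c) * f

theorem translateMul_apply (c : ℝ) (f : CircleDeg1Liftˣ) (x : ℝ) :
    (translateMul c f : CircleDeg1Lift) x = c + f x := by
  simp [translateMul, mul_apply]

theorem rotZ_translate (c : ℝ) : rotZ (translate (Multiplicative.ofAdd c)) = c :=
  translationNumber_translate c

theorem le_translateMul {c : ℝ} (hc : 0 ≤ c) (f : CircleDeg1Liftˣ) :
    (f : CircleDeg1Lift) ≤ translateMul c f := fun x => by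
  rw [translateMul_apply]
  linarith

theorem continuous_rotZ_translateMul (f : CircleDeg1Liftˣ) :
    Continuous fun c => rotZ (translateMul c f) := by
  have hf : Continuous (f : CircleDeg1Lift) :=
    (f : CircleDeg1Lift).continuous_iff_surjective.mpr (toOrderIso f).surjective
  refine continuous_translationNumber_comp fun n => ?_
  induction n with
  | zero => simpa using continuous_const
  | succ n ih =>
    simp only [pow_succ', mul_apply, translateMul_apply]
    exact continuous_id.add (hf.comp ih)

theorem rotZ_translateMul_natCast (n : ℕ) (f : CircleDeg1Liftˣ) :
    rotZ (translateMul n f) = n + rotZ f := by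
  have hcomm : Commute (translate (Multiplicative.ofAdd (n : ℝ)) : CircleDeg1Lift) f :=
    commute_iff_commute.mpr ((f : CircleDeg1Lift).commute_nat_add n).symm
  simp [rotZ, translateMul, translationNumber_mul_of_commute hcomm, translationNumber_translate]

theorem exists_translateMul_rotZ_eq (f : CircleDeg1Liftˣ) {t : ℝ} (h : rotZ f ≤ t) :
    ∃ c, 0 ≤ c ∧ rotZ (translateMul c f) = t := by
  set n := ⌈t - rotZ f⌉₊
  have hivt :=
    intermediate_value_Icc (Nat.cast_nonneg n) (continuous_rotZ_translateMul f).continuousOn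
  have h0 : rotZ (translateMul 0 f) = rotZ f := by simp [translateMul]
  rw [h0, rotZ_translateMul_natCast] at hivt
  obtain ⟨c, hc, hct⟩ := hivt ⟨h, by linarith [Nat.le_ceil (t - rotZ f)]⟩
  exact ⟨c, hc.1, hct⟩

section PositiveWords

variable {M : Type*} [Monoid M] {s : Set M} {w : M}

theorem coe_map_le_of_mem_closure {ρ ρ' : M →* CircleDeg1Liftˣ}
    (hle : ∀ g ∈ s, (ρ g : CircleDeg1Lift) ≤ ρ' g) (hw : w ∈ Submonoid.closure s) :
    (ρ w : CircleDeg1Lift) ≤ ρ' w := by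
  induction hw using Submonoid.closure_induction with
  | mem g hg => exact hle g hg
  | one => simp
  | mul x y _ _ hx hy =>
    intro t
    simp only [map_mul, Units.val_mul, mul_apply]
    exact ((ρ x : CircleDeg1Lift).mono (hy t)).trans (hx _)

theorem bddAbove_rotZ_of_mem_closure {P : Set (M →* CircleDeg1Liftˣ)}
    (hs : ∀ g ∈ s, BddAbove ((fun ρ => rotZ (ρ g)) '' P)) (hw : w ∈ Submonoid.closure s) :
    BddAbove ((fun ρ => rotZ (ρ w)) '' P) := by
  induction hw using Submonoid.closure_induction with
  | mem g hg => exact hs g hg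
  | one => exact ⟨0, by rintro _ ⟨ρ, -, rfl⟩; simp [rotZ, translationNumber_one]⟩
  | mul x y _ _ hx hy =>
    obtain ⟨Cx, hCx⟩ := hx
    obtain ⟨Cy, hCy⟩ := hy
    refine ⟨Cx + Cy + 2, ?_⟩
    rintro _ ⟨ρ, hρ, rfl⟩
    have hmul := translationNumber_mul_le (ρ x : CircleDeg1Lift) (ρ y)
    have := hCx ⟨ρ, hρ, rfl⟩
    have := hCy ⟨ρ, hρ, rfl⟩
    simp only [rotZ, map_mul, Units.val_mul] at *
    linarith

end PositiveWords

def homOfGens (A B : CircleDeg1Liftˣ) : FreeGroup Bool →* CircleDeg1Liftˣ :=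
  FreeGroup.lift fun x => if x then A else B

@[simp]
theorem homOfGens_genA (A B : CircleDeg1Liftˣ) : homOfGens A B genA = A := by
  simp [homOfGens, genA]

@[simp]
theorem homOfGens_genB (A B : CircleDeg1Liftˣ) : homOfGens A B genB = B := by
  simp [homOfGens, genB]

theorem bddAbove_rotZ_of_isPositiveWord {w : FreeGroup Bool} (hw : IsPositiveWord w) (r s : ℝ) :
    BddAbove { t : ℝ | ∃ ρ : FreeGroup Bool →* CircleDeg1Liftˣ,
      rotZ (ρ genA) = r ∧ rotZ (ρ genB) = s ∧ rotZ (ρ w) = t } := by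
  have hgens : ∀ g ∈ ({genA, genB} : Set (FreeGroup Bool)), BddAbove ((fun ρ => rotZ (ρ g)) ''
      {ρ : FreeGroup Bool →* CircleDeg1Liftˣ | rotZ (ρ genA) = r ∧ rotZ (ρ genB) = s}) := by
    rintro g (rfl | rfl)
    · exact ⟨r, by rintro _ ⟨ρ, ⟨ha, -⟩, rfl⟩; exact ha.le⟩
    · exact ⟨s, by rintro _ ⟨ρ, ⟨-, hb⟩, rfl⟩; exact hb.le⟩
  refine (bddAbove_rotZ_of_mem_closure hgens hw).mono ?_
  rintro _ ⟨ρ, ha, hb, rfl⟩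
  exact ⟨ρ, ⟨ha, hb⟩, rfl⟩

/-- For a positive word `w`, `R(w,r,s)` is monotone nondecreasing in each of `r` and `s`. -/
theorem RR_monotone_of_positive (w : FreeGroup Bool) (hw : IsPositiveWord w)
    (r r' s s' : ℝ) (hr : r ≤ r') (hs : s ≤ s') :
    RR w r s ≤ RR w r' s' := by
  refine csSup_le ⟨_, homOfGens (translate (.ofAdd r)) (translate (.ofAdd s)),
    by simp [rotZ_translate], by simp [rotZ_translate], rfl⟩ ?_
  rintro _ ⟨ρ, rfl, rfl, rfl⟩
  obtain ⟨ca, hca, hrot_a⟩ := exists_translateMul_rotZ_eq (ρ genA) hr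
  obtain ⟨cb, hcb, hrot_b⟩ := exists_translateMul_rotZ_eq (ρ genB) hs
  set ρ' := homOfGens (translateMul ca (ρ genA)) (translateMul cb (ρ genB))
  have hle : (ρ w : CircleDeg1Lift) ≤ ρ' w := by
    refine coe_map_le_of_mem_closure ?_ hw
    rintro g (rfl | rfl)
    · simpa [ρ'] using le_translateMul hca (ρ genA)
    · simpa [ρ'] using le_translateMul hcb (ρ genB)
  exact (translationNumber_mono hle).trans <| le_csSup (bddAbove_rotZ_of_isPositiveWord hw r' s')
    ⟨ρ', by simpa [ρ'] using hrot_a, by simpa [ρ'] using hrot_b, rfl⟩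
end
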